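/- arXiv:2507.01851 — 5 statements merged into one kernel-verified Lean document; each statement's English description precedes it below -/
import Mathlib

section
/- If G is a disconnected graph with exactly two connected components G₁ and G₂, then every mutual-visibility set of G is contained entirely in one component, and consequently the visibility polynomial satisfies V(G) = V(G₁) + V(G₂) − 1. -/
open SimpleGraph Polynomial

/-- Two vertices `u`, `v` are `X`-visible in `G` if some shortest `u`\u2013`v` path
has no internal vertex in `X`. -/
def SimpleGraph.XVisible {V : Type*} (G : SimpleGraph V) (X : Set V) (u v : V) : Prop :=
  ∃ p : G.Walk u v, p.IsPath ∧ p.length = G.dist u v ∧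
    ∀ w ∈ p.support, w ∈ X → w = u ∨ w = v

/-- `X` is a mutual-visibility set of `G`. -/
def SimpleGraph.IsMutualVisibilitySet {V : Type*} (G : SimpleGraph V) (X : Set V) : Prop :=
  ∀ u ∈ X, ∀ v ∈ X, G.XVisible X u v


open scoped Classical in
/-- The visibility polynomial `∑ r_i x^i`, where `r_i` is the number of
mutual-visibility sets of cardinality `i`. -/
noncomputable def visPoly {V : Type*} (G : SimpleGraph V) [Fintype V] : Polynomial ℤ :=
  ∑ X : Finset V, if G.IsMutualVisibilitySet ↑X then (Polynomial.X ^ X.card : Polynomial ℤ) else 0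


/-!
A path of `G ⊕g H` never leaves the summand it starts in, so a mutual-visibility set cannot meet
both summands. Moreover each summand sits in `G ⊕g H` as a union of components: every walk between
two of its vertices is the image of a walk in the summand, so distances, shortest paths and hence
mutual visibility are the same in the summand and in the sum. The mutual-visibility sets of
`G ⊕g H` are therefore those of `G` together with those of `H`, the empty set being counted twice.
-/

namespace Finset

theorem map_inl_toLeft_of_forall_isLeft {α β : Type*} {u : Finset (α ⊕ β)}
    (h : ∀ v ∈ u, v.isLeft) : u.toLeft.map .inl = u := by
  ext (a | b)
  · simp
  · simpa using fun hb : Sum.inr b ∈ u => by simpa using h _ hb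

theorem map_inr_toRight_of_forall_isRight {α β : Type*} {u : Finset (α ⊕ β)}
    (h : ∀ v ∈ u, v.isRight) : u.toRight.map .inr = u := by
  ext (a | b)
  · simpa using fun ha : Sum.inl a ∈ u => by simpa using h _ ha
  · simp

end Finset

namespace SimpleGraph

section ClosedEmbedding

variable {V V' : Type*} {G : SimpleGraph V} {G' : SimpleGraph V'} (f : G ↪g G')
  (hf : ∀ x y, G'.Adj (f x) y → y ∈ Set.range f)
include hf

theorem Embedding.exists_walk_map_eq_of_adj_mem_range {u v : V} (p : G'.Walk (f u) (f v)) :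
    ∃ q : G.Walk u v, q.map f.toHom = p := by
  suffices ∀ {x y : V'} (p : G'.Walk x y) (u v : V) (hu : f u = x) (hv : f v = y),
      ∃ q : G.Walk u v, q.map f.toHom = p.copy hu.symm hv.symm from this p u v rfl rfl
  intro x y p
  induction p with
  | nil =>
    rintro u v rfl huv
    obtain rfl := f.injective huv
    exact ⟨.nil, rfl⟩
  | cons hadj p ih =>
    rintro u v rfl rfl
    obtain ⟨w, rfl⟩ := hf _ _ hadj
    obtain ⟨q, hq⟩ := ih w v rfl rfl
    exact ⟨.cons (f.map_adj_iff.mp hadj) q, by simp [hq]⟩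

theorem Embedding.dist_eq_of_adj_mem_range (u v : V) : G'.dist (f u) (f v) = G.dist u v := by
  rw [dist_eq_sInf, dist_eq_sInf]
  congr 1
  ext n
  constructor
  · rintro ⟨p, rfl⟩
    obtain ⟨q, rfl⟩ := f.exists_walk_map_eq_of_adj_mem_range hf p
    exact ⟨q, (Walk.length_map _ _).symm⟩
  · rintro ⟨q, rfl⟩
    exact ⟨q.map f.toHom, Walk.length_map _ _⟩

theorem Embedding.xVisible_image_iff_of_adj_mem_range (S : Set V) (u v : V) :
    G'.XVisible (f '' S) (f u) (f v) ↔ G.XVisible S u v := by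
  have key : ∀ q : G.Walk u v,
      ((q.map f.toHom).IsPath ∧ (q.map f.toHom).length = G'.dist (f u) (f v) ∧
        ∀ w ∈ (q.map f.toHom).support, w ∈ f '' S → w = f u ∨ w = f v) ↔
      (q.IsPath ∧ q.length = G.dist u v ∧ ∀ w ∈ q.support, w ∈ S → w = u ∨ w = v) := by
    refine fun q => and_congr (Walk.isPath_map_iff_of_injective f.injective) (and_congr ?_ ?_)
    · rw [Walk.length_map, f.dist_eq_of_adj_mem_range hf]
    · simp only [Walk.support_map, List.forall_mem_map, Embedding.coe_toHom,
        f.injective.mem_set_image, f.injective.eq_iff]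
  constructor
  · rintro ⟨p, hp⟩
    obtain ⟨q, rfl⟩ := f.exists_walk_map_eq_of_adj_mem_range hf p
    exact ⟨q, (key q).mp hp⟩
  · rintro ⟨q, hq⟩
    exact ⟨q.map f.toHom, (key q).mpr hq⟩

theorem Embedding.isMutualVisibilitySet_image_iff_of_adj_mem_range (S : Set V) :
    G'.IsMutualVisibilitySet (f '' S) ↔ G.IsMutualVisibilitySet S := by
  simp only [IsMutualVisibilitySet, Set.forall_mem_image, f.xVisible_image_iff_of_adj_mem_range hf]

end ClosedEmbedding

section Sum

variable {α β : Type*} {G : SimpleGraph α} {H : SimpleGraph β}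

theorem Embedding.sumInl_adj_mem_range (x : α) (y : α ⊕ β) (h : (G ⊕g H).Adj (.inl x) y) :
    y ∈ Set.range (Embedding.sumInl : G ↪g G ⊕g H) := by
  cases y with
  | inl a => exact ⟨a, rfl⟩
  | inr b => simp at h

theorem Embedding.sumInr_adj_mem_range (x : β) (y : α ⊕ β) (h : (G ⊕g H).Adj (.inr x) y) :
    y ∈ Set.range (Embedding.sumInr : H ↪g G ⊕g H) := by
  cases y with
  | inl a => simp at h
  | inr b => exact ⟨b, rfl⟩

theorem sum_isMutualVisibilitySet_map_inl_iff (A : Finset α) :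
    (G ⊕g H).IsMutualVisibilitySet ↑(A.map (.inl : α ↪ α ⊕ β)) ↔ G.IsMutualVisibilitySet ↑A := by
  rw [Finset.coe_map]
  exact Embedding.sumInl.isMutualVisibilitySet_image_iff_of_adj_mem_range
    Embedding.sumInl_adj_mem_range _

theorem sum_isMutualVisibilitySet_map_inr_iff (B : Finset β) :
    (G ⊕g H).IsMutualVisibilitySet ↑(B.map (.inr : β ↪ α ⊕ β)) ↔ H.IsMutualVisibilitySet ↑B := by
  rw [Finset.coe_map]
  exact Embedding.sumInr.isMutualVisibilitySet_image_iff_of_adj_mem_range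
    Embedding.sumInr_adj_mem_range _

theorem IsMutualVisibilitySet.sum_isLeft_or_isRight {X : Set (α ⊕ β)}
    (hX : (G ⊕g H).IsMutualVisibilitySet X) : (∀ v ∈ X, v.isLeft) ∨ (∀ v ∈ X, v.isRight) := by
  by_contra! h
  obtain ⟨⟨v, hv, hvl⟩, ⟨w, hw, hwr⟩⟩ := h
  obtain ⟨b, rfl⟩ := Sum.isRight_iff.mp (by simpa using hvl)
  obtain ⟨a, rfl⟩ := Sum.isLeft_iff.mp (by simpa using hwr)
  obtain ⟨p, -⟩ := hX _ hw _ hv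
  exact not_reachable_sum_inl_inr a b ⟨p⟩

end Sum

open scoped Classical in
noncomputable def mutualVisibilityFinsets {V : Type*} (G : SimpleGraph V) [Fintype V] :
    Finset (Finset V) :=
  Finset.univ.filter fun X => G.IsMutualVisibilitySet ↑X

theorem visPoly_eq_sum_mutualVisibilityFinsets {V : Type*} (G : SimpleGraph V) [Fintype V] :
    visPoly G = ∑ X ∈ G.mutualVisibilityFinsets, (Polynomial.X ^ X.card : ℤ[X]) := by
  rw [visPoly, mutualVisibilityFinsets, Finset.sum_filter]

section SumFinsets

variable {α β : Type*} [Fintype α] [Fintype β] {G : SimpleGraph α} {H : SimpleGraph β}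

theorem mutualVisibilityFinsets_sum [DecidableEq α] [DecidableEq β] :
    (G ⊕g H).mutualVisibilityFinsets =
      G.mutualVisibilityFinsets.map (Finset.mapEmbedding .inl).toEmbedding ∪
        H.mutualVisibilityFinsets.map (Finset.mapEmbedding .inr).toEmbedding := by
  ext X
  simp only [mutualVisibilityFinsets, Finset.mem_union, Finset.mem_map, Finset.mem_filter,
    Finset.mem_univ, true_and, RelEmbedding.coe_toEmbedding, Finset.mapEmbedding_apply]
  constructor
  · intro hX
    rcases hX.sum_isLeft_or_isRight with h | h
    · have hX' := Finset.map_inl_toLeft_of_forall_isLeft h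
      refine .inl ⟨X.toLeft, ?_, hX'⟩
      rwa [← sum_isMutualVisibilitySet_map_inl_iff (H := H), hX']
    · have hX' := Finset.map_inr_toRight_of_forall_isRight h
      refine .inr ⟨X.toRight, ?_, hX'⟩
      rwa [← sum_isMutualVisibilitySet_map_inr_iff (G := G), hX']
  · rintro (⟨A, hA, rfl⟩ | ⟨B, hB, rfl⟩)
    · exact (sum_isMutualVisibilitySet_map_inl_iff A).mpr hA
    · exact (sum_isMutualVisibilitySet_map_inr_iff B).mpr hB

theorem map_inl_mutualVisibilityFinsets_inter_map_inr [DecidableEq α] [DecidableEq β] :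
    G.mutualVisibilityFinsets.map (Finset.mapEmbedding .inl).toEmbedding ∩
      H.mutualVisibilityFinsets.map (Finset.mapEmbedding .inr).toEmbedding = {∅} := by
  ext X
  simp only [mutualVisibilityFinsets, Finset.mem_inter, Finset.mem_map, Finset.mem_filter,
    Finset.mem_univ, true_and, RelEmbedding.coe_toEmbedding, Finset.mapEmbedding_apply,
    Finset.mem_singleton]
  constructor
  · rintro ⟨⟨A, -, rfl⟩, ⟨B, -, hBA⟩⟩
    have hdisj := Finset.disjoint_map_inl_map_inr A B
    rwa [hBA, disjoint_self] at hdisj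
  · rintro rfl
    exact ⟨⟨∅, by simp [IsMutualVisibilitySet], rfl⟩, ⟨∅, by simp [IsMutualVisibilitySet], rfl⟩⟩

theorem visPoly_sum : visPoly (G ⊕g H) = visPoly G + visPoly H - 1 := by
  classical
  have h := Finset.sum_union_inter (f := fun X : Finset (α ⊕ β) => (Polynomial.X ^ X.card : ℤ[X]))
    (s₁ := G.mutualVisibilityFinsets.map (Finset.mapEmbedding .inl).toEmbedding)
    (s₂ := H.mutualVisibilityFinsets.map (Finset.mapEmbedding .inr).toEmbedding)
  rw [map_inl_mutualVisibilityFinsets_inter_map_inr, ← mutualVisibilityFinsets_sum,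
    Finset.sum_singleton, Finset.sum_map, Finset.sum_map] at h
  simp only [RelEmbedding.coe_toEmbedding, Finset.mapEmbedding_apply, Finset.card_map,
    Finset.card_empty, pow_zero] at h
  rw [visPoly_eq_sum_mutualVisibilityFinsets, visPoly_eq_sum_mutualVisibilityFinsets,
    visPoly_eq_sum_mutualVisibilityFinsets]
  linear_combination h

end SumFinsets

end SimpleGraph

theorem visPoly_two_components_general {α β : Type*} [Fintype α] [Fintype β]
    (G₁ : SimpleGraph α) (G₂ : SimpleGraph β) :
    (∀ X : Set (α ⊕ β), (G₁ ⊕g G₂).IsMutualVisibilitySet X →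
      (∀ v ∈ X, v.isLeft) ∨ (∀ v ∈ X, v.isRight)) ∧
    visPoly (G₁ ⊕g G₂) = visPoly G₁ + visPoly G₂ - 1 :=
  ⟨fun _ hX => hX.sum_isLeft_or_isRight, SimpleGraph.visPoly_sum⟩

theorem visPoly_two_components {α β : Type*} [Fintype α] [Fintype β]
    [Nonempty α] [Nonempty β] (G₁ : SimpleGraph α) (G₂ : SimpleGraph β)
    (h₁ : G₁.Connected) (h₂ : G₂.Connected) :
    (∀ X : Set (α ⊕ β), (G₁ ⊕g G₂).IsMutualVisibilitySet X →
      (∀ v ∈ X, v.isLeft) ∨ (∀ v ∈ X, v.isRight)) ∧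
    visPoly (G₁ ⊕g G₂) = visPoly G₁ + visPoly G₂ - 1 :=
  visPoly_two_components_general G₁ G₂
end

section
/- For an odd cycle C_n (n ≥ 3 odd), the number of mutual-visibility sets of cardinality 3 equals n(n²−1)/24. -/
open SimpleGraph Polynomial

open scoped Classical in
/-- The number of mutual-visibility sets of cardinality 3 (the maximum) in the cycle `C_n`. -/
noncomputable def rmuC (n : ℕ) : ℕ :=
  (Finset.univ.filter (fun X : Finset (Fin n) =>
    X.card = 3 ∧ (cycleGraph n).IsMutualVisibilitySet ↑X)).card

/-!
Three distinct points of `C_n` cut the cycle into three arcs, of lengths adding up to `n`. Two of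
the points see each other iff the arc joining them that avoids the third point is a shortest path,
i.e. iff its length is at most `n / 2`: along a walk that avoids a vertex `c`, the position `z - c`
changes by at most one per step, so such a walk is at least as long as that arc. Hence a 3-set is a
mutual-visibility set iff each of its arcs has length at most `n / 2`. Counting the sets together
with a marked point gives `3 · rmuC n = n · #{(p, q) | 0 < p < q < n, p, q - p, n - q ≤ n / 2}`,
and for `n = 2m + 1` there are `m (m + 1) / 2` such pairs.
-/

open Finset Fin.NatCast

namespace Fin

-- Rewriting with this and splitting the `if`s turns facts about cyclic differences into
-- `omega` goals.
theorem val_sub_eq_ite {n : ℕ} (a b : Fin n) :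
    (a - b).val = if b ≤ a then a.val - b.val else n + a.val - b.val := by
  split_ifs with h
  · exact Fin.sub_val_of_le h
  · exact Fin.coe_sub_iff_lt.mpr (not_le.mp h)

variable {n : ℕ} [NeZero n]

theorem val_add_natCast_sub_self (a : Fin n) {k : ℕ} (hk : k < n) :
    (a + (k : Fin n) - a).val = k := by
  rw [add_sub_cancel_left, Fin.val_cast_of_lt hk]

theorem card_triple_add_natCast (a : Fin n) {p q : ℕ} (hp : 0 < p) (hpq : p < q) (hq : q < n) :
    #{a, a + (p : Fin n), a + (q : Fin n)} = 3 := by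
  have hb := val_add_natCast_sub_self a (hpq.trans hq)
  have hc := val_add_natCast_sub_self a hq
  refine card_eq_three.mpr ⟨_, _, _, fun h => ?_, fun h => ?_, fun h => ?_, rfl⟩
  · rw [← h, sub_self, Fin.val_zero] at hb; omega
  · rw [← h, sub_self, Fin.val_zero] at hc; omega
  · rw [h, hc] at hb; omega

theorem eq_of_triple_add_natCast_eq (a : Fin n) {p q p' q' : ℕ} (hp : 0 < p) (hpq : p < q)
    (hq : q < n) (hpq' : p' < q') (hq' : q' < n)
    (h : ({a, a + (p : Fin n), a + (q : Fin n)} : Finset (Fin n)) = {a, a + p', a + q'}) :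
    p = p' ∧ q = q' := by
  have mem : ∀ k < n, a + (k : Fin n) ∈ ({a, a + (p' : Fin n), a + (q' : Fin n)} : Finset _) →
      k = 0 ∨ k = p' ∨ k = q' := by
    intro k hk hmem
    have hval := val_add_natCast_sub_self a hk
    simp only [mem_insert, mem_singleton] at hmem
    rcases hmem with e | e | e <;> rw [e] at hval
    · rw [sub_self, Fin.val_zero] at hval; omega
    · rw [val_add_natCast_sub_self a (hpq'.trans hq')] at hval; omega
    · rw [val_add_natCast_sub_self a hq'] at hval; omega
  have hpmem := mem p (hpq.trans hq) (h ▸ by simp)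
  have hqmem := mem q hq (h ▸ by simp)
  omega

theorem exists_eq_triple_add_natCast {X : Finset (Fin n)} (hX : #X = 3) {a : Fin n} (ha : a ∈ X) :
    ∃ p q : ℕ, 0 < p ∧ p < q ∧ q < n ∧ X = {a, a + (p : Fin n), a + (q : Fin n)} := by
  have hcard : #(X.erase a) = 2 := by rw [card_erase_of_mem ha, hX]
  obtain ⟨b, c, hbc, hbcX⟩ := card_eq_two.mp hcard
  have hXabc : X = {a, b, c} := by rw [← insert_erase ha, hbcX]
  have pos : ∀ z ∈ X.erase a, 0 < (z - a).val := fun z hz =>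
    Nat.pos_of_ne_zero (Fin.val_ne_zero_iff.mpr (sub_ne_zero.mpr (ne_of_mem_erase hz)))
  have hb := pos b (by simp [hbcX])
  have hc := pos c (by simp [hbcX])
  have hne : (b - a).val ≠ (c - a).val := fun h => hbc (by simpa using Fin.ext h)
  rcases hne.lt_or_gt with h | h
  · exact ⟨_, _, hb, h, (c - a).isLt, by simp [hXabc]⟩
  · exact ⟨_, _, hc, h, (b - a).isLt, by simp [hXabc, pair_comm]⟩

end Fin

/-- The arcs of `C_n` cut out by `{a, a + p, a + q}` have lengths `p`, `q - p` and `n - q`. -/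
def gapPairs (n : ℕ) : Finset (ℕ × ℕ) :=
  {pq ∈ range n ×ˢ range n | 0 < pq.1 ∧ pq.1 < pq.2 ∧
    2 * pq.1 ≤ n ∧ 2 * (pq.2 - pq.1) ≤ n ∧ 2 * (n - pq.2) ≤ n}

theorem mem_gapPairs {n p q : ℕ} : (p, q) ∈ gapPairs n ↔
    0 < p ∧ p < q ∧ q < n ∧ 2 * p ≤ n ∧ 2 * (q - p) ≤ n ∧ 2 * (n - q) ≤ n := by
  simp only [gapPairs, mem_filter, mem_product, mem_range]
  omega

theorem two_mul_card_gapPairs (m : ℕ) : 2 * #(gapPairs (2 * m + 1)) = m * (m + 1) := by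
  have h : #(gapPairs (2 * m + 1)) = #((range m).sigma fun i => range (i + 1)) := by
    refine card_nbij' (fun pq => ⟨pq.1 - 1, pq.2 - m - 1⟩) (fun ij => (ij.1 + 1, ij.2 + m + 1))
      ?_ ?_ ?_ ?_
    · rintro ⟨p, q⟩ h
      simp only [mem_coe, mem_gapPairs, mem_sigma, mem_range] at h ⊢
      omega
    · rintro ⟨i, j⟩ h
      simp only [mem_coe, mem_gapPairs, mem_sigma, mem_range] at h ⊢
      omega
    · rintro ⟨p, q⟩ h
      simp only [mem_coe, mem_gapPairs] at h
      simp only [Prod.mk.injEq]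
      omega
    · rintro ⟨i, j⟩ h
      simp only [mem_coe, mem_sigma, mem_range] at h
      simp only [Sigma.mk.injEq, heq_eq_eq]
      omega
  have gauss := sum_range_id_mul_two (m + 1)
  rw [sum_range_succ'] at gauss
  rw [h, card_sigma]
  simp only [card_range, Nat.add_sub_cancel] at gauss ⊢
  linarith

namespace SimpleGraph

variable {V : Type*} {G : SimpleGraph V}

theorem Walk.apply_le_apply_add_length {s : Set V} {f : V → ℕ}
    (hf : ∀ ⦃x y⦄, G.Adj x y → x ∈ s → y ∈ s → f y ≤ f x + 1) {u v : V}
    (p : G.Walk u v) (hp : ∀ z ∈ p.support, z ∈ s) : f v ≤ f u + p.length := by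
  induction p with
  | nil => simp
  | cons h q ih =>
    simp only [Walk.support_cons, List.mem_cons, forall_eq_or_imp] at hp
    have := hf h hp.1 (hp.2 _ q.start_mem_support)
    have := ih hp.2
    rw [Walk.length_cons]
    omega

theorem xVisible_refl (X : Set V) (u : V) : G.XVisible X u u :=
  ⟨Walk.nil, Walk.IsPath.nil, by simp, by simp⟩

theorem XVisible.symm {X : Set V} {u v : V} (h : G.XVisible X u v) : G.XVisible X v u := by
  obtain ⟨p, hp, hlen, hX⟩ := h
  exact ⟨p.reverse, hp.reverse, by rw [Walk.length_reverse, hlen, dist_comm],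
    fun w hw hwX => (hX w (by simpa using hw) hwX).symm⟩

theorem isMutualVisibilitySet_triple_iff {a b c : V} :
    G.IsMutualVisibilitySet {a, b, c} ↔
      G.XVisible {a, b, c} a b ∧ G.XVisible {a, b, c} b c ∧ G.XVisible {a, b, c} c a := by
  refine ⟨fun h => ⟨h a (by simp) b (by simp), h b (by simp) c (by simp),
    h c (by simp) a (by simp)⟩, ?_⟩
  rintro ⟨hab, hbc, hca⟩ u hu v hv
  simp only [Set.mem_insert_iff, Set.mem_singleton_iff] at hu hv
  rcases hu with rfl | rfl | rfl <;> rcases hv with rfl | rfl | rfl <;>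
    first | exact xVisible_refl _ _ | assumption | exact hab.symm | exact hbc.symm | exact hca.symm

variable {n : ℕ}

theorem cycleGraph_adj_add_one [NeZero n] (hn : 1 < n) (a : Fin n) :
    (cycleGraph n).Adj a (a + 1) := by
  rw [cycleGraph_adj', add_sub_cancel_left, Fin.val_one', Nat.mod_eq_of_lt hn]
  exact Or.inr rfl

theorem val_sub_le_of_cycleGraph_adj {x y c : Fin n} (h : (cycleGraph n).Adj x y) (hx : x ≠ c) :
    (y - c).val ≤ (x - c).val + 1 := by
  rw [cycleGraph_adj'] at h
  rw [Ne, Fin.ext_iff] at hx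
  simp only [Fin.val_sub_eq_ite, Fin.le_iff_val_le_val] at *
  split_ifs at * <;> omega

theorem min_val_sub_le_of_cycleGraph_adj {x y u : Fin n} (h : (cycleGraph n).Adj x y) :
    min (y - u).val (u - y).val ≤ min (x - u).val (u - x).val + 1 := by
  rw [cycleGraph_adj'] at h
  simp only [Fin.val_sub_eq_ite, Fin.le_iff_val_le_val] at *
  split_ifs at * <;> omega

theorem exists_cycleGraph_walk_add [NeZero n] (hn : 1 < n) (u : Fin n) (k : ℕ) :
    ∃ p : (cycleGraph n).Walk u (u + (k : Fin n)),
      p.length = k ∧ ∀ z ∈ p.support, ∃ i ≤ k, z = u + (i : Fin n) := by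
  induction k with
  | zero =>
    exact ⟨Walk.nil.copy rfl (by simp), by simp, fun z hz => ⟨0, le_rfl, by simpa using hz⟩⟩
  | succ k ih =>
    obtain ⟨p, hlen, hsupp⟩ := ih
    have h : (cycleGraph n).Adj (u + (k : Fin n)) (u + ((k + 1 : ℕ) : Fin n)) := by
      rw [Nat.cast_succ, ← add_assoc]
      exact cycleGraph_adj_add_one hn _
    refine ⟨p.concat h, by simp [hlen], fun z hz => ?_⟩
    simp only [Walk.support_concat, List.mem_append, List.mem_singleton] at hz
    rcases hz with hz | rfl
    · obtain ⟨i, hi, rfl⟩ := hsupp z hz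
      exact ⟨i, by omega, rfl⟩
    · exact ⟨k + 1, le_rfl, rfl⟩

theorem cycleGraph_dist_le [NeZero n] (hn : 1 < n) (u v : Fin n) :
    (cycleGraph n).dist u v ≤ (v - u).val := by
  obtain ⟨p, hp, -⟩ := exists_cycleGraph_walk_add hn u (v - u).val
  have h := dist_le p
  rwa [hp, Fin.cast_val_eq_self, add_sub_cancel] at h

theorem min_le_cycleGraph_dist [NeZero n] (u v : Fin n) :
    min (v - u).val (u - v).val ≤ (cycleGraph n).dist u v := by
  obtain ⟨p, hp⟩ := (cycleGraph_preconnected u v).exists_walk_length_eq_dist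
  have h := p.apply_le_apply_add_length (s := Set.univ) (f := fun z => min (z - u).val (u - z).val)
    (fun _ _ h _ _ => min_val_sub_le_of_cycleGraph_adj h) (by simp)
  simpa [hp] using h

theorem xVisible_cycleGraph_iff [NeZero n] {u v w : Fin n} {X : Set (Fin n)} (hwX : w ∈ X)
    (hX : X ⊆ {u, v, w}) (hvw : (v - u).val < (w - u).val) :
    (cycleGraph n).XVisible X u v ↔ 2 * (v - u).val ≤ n := by
  have hn : 1 < n := by have := (w - u).isLt; omega
  constructor
  · rintro ⟨p, -, hlen, hp⟩
    have hwp : w ∉ p.support := fun h => by rcases hp w h hwX with rfl | rfl <;> simp at hvw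
    have hlip := p.apply_le_apply_add_length (s := {w}ᶜ) (f := fun z => (z - w).val)
      (fun _ _ h hx _ => val_sub_le_of_cycleGraph_adj h hx) (fun z hz hzw => hwp (hzw ▸ hz))
    have hdist := cycleGraph_dist_le hn v u
    rw [dist_comm, ← hlen] at hdist
    simp only [Fin.val_sub_eq_ite, Fin.le_iff_val_le_val] at *
    split_ifs at * <;> omega
  · intro h
    obtain ⟨p, hlen, hsupp⟩ := exists_cycleGraph_walk_add hn u (v - u).val
    have e : u + ((v - u).val : Fin n) = v := by simp
    have hdist : (cycleGraph n).dist u v = (v - u).val := by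
      refine le_antisymm (cycleGraph_dist_le hn u v) ?_
      have := min_le_cycleGraph_dist u v
      simp only [Fin.val_sub_eq_ite, Fin.le_iff_val_le_val] at *
      split_ifs at * <;> omega
    refine ⟨p.copy rfl e, (p.copy rfl e).isPath_of_length_eq_dist (by simp [hlen, hdist]),
      by simp [hlen, hdist], fun z hz hzX => ?_⟩
    rw [Walk.support_copy] at hz
    obtain ⟨i, hi, rfl⟩ := hsupp _ hz
    rcases hX hzX with h' | h' | h'
    · exact Or.inl h'
    · exact Or.inr h'
    · rw [← h', add_sub_cancel_left, Fin.val_cast_of_lt (by omega)] at hvw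
      omega

theorem isMutualVisibilitySet_cycleGraph_triple_iff [NeZero n] {a b c : Fin n} (hab : a ≠ b)
    (habc : (b - a).val < (c - a).val) :
    (cycleGraph n).IsMutualVisibilitySet {a, b, c} ↔
      2 * (b - a).val ≤ n ∧ 2 * (c - b).val ≤ n ∧ 2 * (a - c).val ≤ n := by
  have hgaps : (c - b).val < (a - b).val ∧ (a - c).val < (b - c).val := by
    rw [Ne, Fin.ext_iff] at hab
    simp only [Fin.val_sub_eq_ite, Fin.le_iff_val_le_val] at *
    split_ifs at * <;> omega
  have rotate (x y z : Fin n) : ({x, y, z} : Set (Fin n)) ⊆ {y, z, x} := fun w hw => by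
    simp only [Set.mem_insert_iff, Set.mem_singleton_iff] at hw ⊢
    tauto
  rw [isMutualVisibilitySet_triple_iff, xVisible_cycleGraph_iff (w := c) (by simp) subset_rfl habc,
    xVisible_cycleGraph_iff (w := a) (by simp) (rotate a b c) hgaps.1,
    xVisible_cycleGraph_iff (w := b) (by simp) ((rotate a b c).trans (rotate b c a)) hgaps.2]

theorem isMutualVisibilitySet_cycleGraph_iff_mem_gapPairs [NeZero n] (a : Fin n) {p q : ℕ}
    (hp : 0 < p) (hpq : p < q) (hq : q < n) :
    (cycleGraph n).IsMutualVisibilitySet {a, a + (p : Fin n), a + (q : Fin n)} ↔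
      (p, q) ∈ gapPairs n := by
  have hb := Fin.val_add_natCast_sub_self a (hpq.trans hq)
  have hc := Fin.val_add_natCast_sub_self a hq
  have hab : a ≠ a + (p : Fin n) := fun h => by rw [← h, sub_self, Fin.val_zero] at hb; omega
  rw [isMutualVisibilitySet_cycleGraph_triple_iff hab (by omega), mem_gapPairs]
  generalize a + (p : Fin n) = b at *
  generalize a + (q : Fin n) = c at *
  simp only [Fin.val_sub_eq_ite, Fin.le_iff_val_le_val] at *
  split_ifs at * <;> omega

end SimpleGraph

theorem three_mul_rmuC {n : ℕ} [NeZero n] : 3 * rmuC n = n * #(gapPairs n) := by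
  classical
  set S : Finset (Finset (Fin n)) :=
    {X | #X = 3 ∧ (cycleGraph n).IsMutualVisibilitySet ↑X} with hS
  have hcard : #(S.sigma fun X => X) = 3 * #S := by
    rw [card_sigma, sum_const_nat fun X hX => (mem_filter.mp hX).2.1, mul_comm]
  have hbij : #((univ : Finset (Fin n)) ×ˢ gapPairs n) = #(S.sigma fun X => X) := by
    refine card_nbij (fun t => ⟨{t.1, t.1 + (t.2.1 : Fin n), t.1 + (t.2.2 : Fin n)}, t.1⟩)
      ?_ ?_ ?_
    · rintro ⟨a, p, q⟩ h
      obtain ⟨hp, hpq, hq, -⟩ := mem_gapPairs.mp (mem_product.mp h).2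
      simp only [mem_coe, mem_sigma, hS, mem_filter, mem_univ, true_and, coe_insert,
        coe_singleton, Fin.card_triple_add_natCast a hp hpq hq,
        isMutualVisibilitySet_cycleGraph_iff_mem_gapPairs a hp hpq hq]
      exact ⟨(mem_product.mp h).2, mem_insert_self _ _⟩
    · rintro ⟨a, p, q⟩ h ⟨a', p', q'⟩ h' e
      obtain ⟨hp, hpq, hq, -⟩ := mem_gapPairs.mp (mem_product.mp h).2
      obtain ⟨-, hpq', hq', -⟩ := mem_gapPairs.mp (mem_product.mp h').2
      simp only [Sigma.mk.injEq, heq_eq_eq] at e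
      obtain ⟨e, rfl⟩ := e
      obtain ⟨rfl, rfl⟩ := Fin.eq_of_triple_add_natCast_eq a hp hpq hq hpq' hq' e
      rfl
    · rintro ⟨X, a⟩ h
      simp only [mem_coe, mem_sigma, hS, mem_filter, mem_univ, true_and] at h
      obtain ⟨⟨hX, hmv⟩, ha⟩ := h
      obtain ⟨p, q, hp, hpq, hq, rfl⟩ := Fin.exists_eq_triple_add_natCast hX ha
      refine ⟨(a, p, q), ?_, rfl⟩
      simp only [coe_insert, coe_singleton,
        isMutualVisibilitySet_cycleGraph_iff_mem_gapPairs a hp hpq hq] at hmv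
      simpa using hmv
  rw [rmuC, ← hcard, ← hbij, card_product, card_univ, Fintype.card_fin]

theorem rmu_odd_cycle_general (n : ℕ) (hodd : Odd n) :
    24 * rmuC n = n * (n ^ 2 - 1) := by
  obtain ⟨m, rfl⟩ := hodd
  have hsq : (2 * m + 1) ^ 2 - 1 = 4 * (m * (m + 1)) := by
    rw [show (2 * m + 1) ^ 2 = 4 * (m * (m + 1)) + 1 by ring, Nat.add_sub_cancel]
  calc 24 * rmuC (2 * m + 1) = 8 * (3 * rmuC (2 * m + 1)) := by ring
    _ = 4 * (2 * m + 1) * (2 * #(gapPairs (2 * m + 1))) := by rw [three_mul_rmuC]; ring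
    _ = (2 * m + 1) * ((2 * m + 1) ^ 2 - 1) := by rw [two_mul_card_gapPairs, hsq]; ring

theorem rmu_odd_cycle (n : ℕ) (hn : 3 ≤ n) (hodd : Odd n) :
    24 * rmuC n = n * (n ^ 2 - 1) :=
  rmu_odd_cycle_general n hodd
end

section
/- Let G be a complete bipartite graph with parts A and B, |B| ≥ 2, and let X = A ∪ Y with Y ⊆ B. Then X is a mutual-visibility set of G if and only if |Y| ≤ 1. -/
open SimpleGraph Polynomial

theorem completeBipartite_side_union_mv_iff {α β : Type*} [Fintype β]
    (hβ : 2 ≤ Fintype.card β) (Y : Set β) :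
    (completeBipartiteGraph α β).IsMutualVisibilitySet
      (Sum.inl '' (Set.univ : Set α) ∪ Sum.inr '' Y) ↔ Y.Subsingleton := by
  set G := completeBipartiteGraph α β with hG
  set X : Set (α ⊕ β) := Sum.inl '' (Set.univ : Set α) ∪ Sum.inr '' Y with hX
  constructor
  · -- forward: MV → Y subsingleton
    intro hmv b1 hb1 b2 hb2
    by_contra hne
    have h1 : (Sum.inr b1 : α ⊕ β) ∈ X := Or.inr ⟨b1, hb1, rfl⟩
    have h2 : (Sum.inr b2 : α ⊕ β) ∈ X := Or.inr ⟨b2, hb2, rfl⟩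
    obtain ⟨p, hp, hlen, hsup⟩ := hmv _ h1 _ h2
    -- p is nonnil; its second vertex is some inl a, which is in X
    cases p with
    | nil => exact hne rfl
    | cons h q =>
      rename_i w
      have hw : w.isLeft := by
        rcases h with ⟨hl, _⟩ | ⟨_, hl⟩
        · simp at hl
        · exact hl
      obtain ⟨a, rfl⟩ := Sum.isLeft_iff.mp hw
      have hmem : (Sum.inl a : α ⊕ β) ∈ (SimpleGraph.Walk.cons h q).support := by
        simp [SimpleGraph.Walk.support_cons, SimpleGraph.Walk.start_mem_support]
      have := hsup _ hmem (Or.inl ⟨a, trivial, rfl⟩)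
      rcases this with h' | h' <;> simp at h'
  · -- backward
    intro hY u hu v hv
    by_cases huv : u = v
    · subst huv
      exact ⟨SimpleGraph.Walk.nil, SimpleGraph.Walk.IsPath.nil, by simp [SimpleGraph.dist_self],
        fun w hw _ => by simp at hw; exact Or.inl hw⟩
    rcases hu with ⟨a1, -, rfl⟩ | ⟨b1, hb1, rfl⟩ <;>
      rcases hv with ⟨a2, -, rfl⟩ | ⟨b2, hb2, rfl⟩
    · -- inl a1, inl a2, a1 ≠ a2
      have ha : a1 ≠ a2 := fun h => huv (by rw [h])
      -- find b ∉ Y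
      obtain ⟨b, hb⟩ : ∃ b : β, b ∉ Y := by
        by_contra hall
        push_neg at hall
        have : Fintype.card β ≤ 1 := by
          by_contra hc
          push_neg at hc
          obtain ⟨x, y, hxy⟩ := Fintype.exists_pair_of_one_lt_card hc
          exact hxy (hY (hall x) (hall y))
        omega
      have h1 : G.Adj (Sum.inl a1) (Sum.inr b) := by simp [hG]
      have h2 : G.Adj (Sum.inr b) (Sum.inl a2) := by simp [hG]
      refine ⟨SimpleGraph.Walk.cons h1 (SimpleGraph.Walk.cons h2 SimpleGraph.Walk.nil),
        ?_, ?_, ?_⟩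
      · simp [SimpleGraph.Walk.isPath_def, ha]
      · have hle : G.dist (Sum.inl a1) (Sum.inl a2) ≤ 2 :=
          SimpleGraph.dist_le (SimpleGraph.Walk.cons h1 (SimpleGraph.Walk.cons h2
            SimpleGraph.Walk.nil))
        have h0 : G.dist (Sum.inl a1) (Sum.inl a2) ≠ 0 := by
          intro h0
          rcases SimpleGraph.dist_eq_zero_iff_eq_or_not_reachable.mp h0 with h' | h'
          · exact huv h'
          · exact h' (SimpleGraph.Walk.cons h1 (SimpleGraph.Walk.cons h2
              SimpleGraph.Walk.nil)).reachable
        have h1' : G.dist (Sum.inl a1) (Sum.inl a2) ≠ 1 := by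
          intro h'
          have := SimpleGraph.dist_eq_one_iff_adj.mp h'
          simp [hG] at this
        simp only [SimpleGraph.Walk.length_cons, SimpleGraph.Walk.length_nil]
        omega
      · intro w hw hwX
        simp [SimpleGraph.Walk.support_cons] at hw
        rcases hw with rfl | rfl | rfl
        · exact Or.inl rfl
        · rcases hwX with ⟨a, -, h⟩ | ⟨b', hb', h⟩
          · simp at h
          · simp at h; subst h; exact absurd hb' hb
        · exact Or.inr rfl
    · -- inl, inr : adjacent
      have h1 : G.Adj (Sum.inl a1) (Sum.inr b2) := by simp [hG]
      refine ⟨SimpleGraph.Walk.cons h1 SimpleGraph.Walk.nil, ?_, ?_, ?_⟩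
      · simp [SimpleGraph.Walk.isPath_def]
      · simp [(SimpleGraph.dist_eq_one_iff_adj).mpr h1]
      · intro w hw _
        simp [SimpleGraph.Walk.support_cons] at hw
        rcases hw with rfl | rfl
        · exact Or.inl rfl
        · exact Or.inr rfl
    · -- inr, inl : adjacent
      have h1 : G.Adj (Sum.inr b1) (Sum.inl a2) := by simp [hG]
      refine ⟨SimpleGraph.Walk.cons h1 SimpleGraph.Walk.nil, ?_, ?_, ?_⟩
      · simp [SimpleGraph.Walk.isPath_def]
      · simp [(SimpleGraph.dist_eq_one_iff_adj).mpr h1]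
      · intro w hw _
        simp [SimpleGraph.Walk.support_cons] at hw
        rcases hw with rfl | rfl
        · exact Or.inl rfl
        · exact Or.inr rfl
    · -- inr, inr both in Y : equal by subsingleton
      exact absurd (congrArg Sum.inr (hY hb1 hb2)) huv
end

section
/- For the complete bipartite graph K_{m,n} with 3 ≤ m ≤ n, the number of mutual-visibility sets of cardinality i equals: C(m+n, i) for 1 ≤ i ≤ m+1; C(m+n, i) − C(n, i−m) for m+2 ≤ i ≤ n+1; and C(m+n, i) − C(n, i−m) − C(m, i−n) for n+2 ≤ i ≤ m+n−2; and there are no mutual-visibility sets of cardinality exceeding m+n−2. -/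
open SimpleGraph Polynomial

open scoped Classical in
/-- The number of mutual-visibility sets of cardinality `i` in `K_{m,n}`. -/
noncomputable def mvCountBip (m n i : ℕ) : ℕ :=
  (Finset.univ.filter (fun X : Finset (Fin m ⊕ Fin n) =>
    X.card = i ∧ (completeBipartiteGraph (Fin m) (Fin n)).IsMutualVisibilitySet ↑X)).card


/-!
Vertices in different parts of `K_{m,n}` are adjacent, and the shortest paths between two distinct
vertices of the same part are exactly the paths of length 2 through the other part. Hence `X` fails
to be a mutual-visibility set exactly when it contains a whole part together with at least two
vertices of the other part. Among the `i`-sets, those containing `A` number `C(n, i - m)` and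
those containing `B` number `C(m, i - n)`, and the two families are disjoint for `i < m + n`;
subtracting the relevant ones from `C(m + n, i)` gives the formula. An `i`-set with
`i ≥ m + n - 1` contains a whole part and at least two vertices of the other.
-/

namespace SimpleGraph

variable {V : Type*} {G : SimpleGraph V} {X : Set V} {u v w : V}

lemma xVisible_self (G : SimpleGraph V) (X : Set V) (u : V) : G.XVisible X u u :=
  ⟨.nil, .nil, by simp, by simp⟩

lemma Adj.xVisible (h : G.Adj u v) (X : Set V) : G.XVisible X u v := by
  refine ⟨h.toWalk, h.toWalk.isPath_of_length_eq_dist ?_, ?_, ?_⟩ <;>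
    simp [dist_eq_one_iff_adj.mpr h]

lemma xVisible_of_adj_of_adj (huw : G.Adj u w) (hwv : G.Adj w v) (huv : u ≠ v)
    (hnadj : ¬G.Adj u v) (hw : w ∉ X) : G.XVisible X u v := by
  let p : G.Walk u v := .cons huw hwv.toWalk
  have hp : p.length = G.dist u v :=
    le_antisymm (p.reachable.one_lt_dist_of_ne_of_not_adj huv hnadj) (G.dist_le p)
  refine ⟨p, p.isPath_of_length_eq_dist hp, hp, ?_⟩
  simp only [p, Walk.support_cons, Adj.toWalk, Walk.support_nil, List.mem_cons,
    List.not_mem_nil, or_false]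
  rintro x (rfl | rfl | rfl) hx
  exacts [.inl rfl, absurd hx hw, .inr rfl]

lemma XVisible.exists_adj_notMem (h : G.XVisible X u v) (huv : u ≠ v) (hnadj : ¬G.Adj u v) :
    ∃ w, G.Adj u w ∧ w ∉ X := by
  obtain ⟨p, -, -, hp⟩ := h
  cases p with
  | nil => exact absurd rfl huv
  | cons hadj q =>
    refine ⟨_, hadj, fun hw => ?_⟩
    rcases hp _ (by simp) hw with h | rfl
    exacts [hadj.ne h.symm, hnadj hadj]

end SimpleGraph

open SimpleGraph Finset

section completeBipartite

variable {α β : Type*} {X : Set (α ⊕ β)}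

lemma completeBipartiteGraph_xVisible_iff_of_not_adj {u v : α ⊕ β} (huv : u ≠ v)
    (hnadj : ¬(completeBipartiteGraph α β).Adj u v) :
    (completeBipartiteGraph α β).XVisible X u v ↔
      ∃ w, (completeBipartiteGraph α β).Adj u w ∧ w ∉ X := by
  refine ⟨fun h => h.exists_adj_notMem huv hnadj, fun ⟨w, huw, hw⟩ => ?_⟩
  refine xVisible_of_adj_of_adj huw ?_ huv hnadj hw
  rcases u with _ | _ <;> rcases v with _ | _ <;> rcases w with _ | _ <;> simp_all

lemma completeBipartiteGraph_xVisible_inl_inl {a b : α} (hab : a ≠ b) :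
    (completeBipartiteGraph α β).XVisible X (.inl a) (.inl b) ↔ ¬Set.range .inr ⊆ X := by
  rw [completeBipartiteGraph_xVisible_iff_of_not_adj (by simpa) (by simp)]
  simp [Set.range_subset_iff]

lemma completeBipartiteGraph_xVisible_inr_inr {a b : β} (hab : a ≠ b) :
    (completeBipartiteGraph α β).XVisible X (.inr a) (.inr b) ↔ ¬Set.range .inl ⊆ X := by
  rw [completeBipartiteGraph_xVisible_iff_of_not_adj (by simpa) (by simp)]
  simp [Set.range_subset_iff]

theorem completeBipartiteGraph_isMutualVisibilitySet_iff :
    (completeBipartiteGraph α β).IsMutualVisibilitySet X ↔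
      (Set.range .inr ⊆ X → (Sum.inl ⁻¹' X).Subsingleton) ∧
        (Set.range .inl ⊆ X → (Sum.inr ⁻¹' X).Subsingleton) := by
  constructor
  · intro hX
    refine ⟨fun hR a ha b hb => ?_, fun hL a ha b hb => ?_⟩ <;> by_contra hab
    · exact (completeBipartiteGraph_xVisible_inl_inl hab).1 (hX _ ha _ hb) hR
    · exact (completeBipartiteGraph_xVisible_inr_inr hab).1 (hX _ ha _ hb) hL
  · rintro ⟨hR, hL⟩ (a | a) ha (b | b) hb
    · obtain rfl | hab := eq_or_ne a b
      · exact xVisible_self _ _ _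
      · exact (completeBipartiteGraph_xVisible_inl_inl hab).2 fun h => hab (hR h ha hb)
    · exact Adj.xVisible (by simp) _
    · exact Adj.xVisible (by simp) _
    · obtain rfl | hab := eq_or_ne a b
      · exact xVisible_self _ _ _
      · exact (completeBipartiteGraph_xVisible_inr_inr hab).2 fun h => hab (hL h ha hb)

variable [Fintype α] [Fintype β]

theorem completeBipartiteGraph_isMutualVisibilitySet_coe_iff {X : Finset (α ⊕ β)} :
    (completeBipartiteGraph α β).IsMutualVisibilitySet ↑X ↔
      (X.toLeft = univ → #X ≤ Fintype.card α + 1) ∧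
        (X.toRight = univ → #X ≤ Fintype.card β + 1) := by
  have hL : Sum.inl ⁻¹' (X : Set (α ⊕ β)) = X.toLeft := by ext; simp
  have hR : Sum.inr ⁻¹' (X : Set (α ⊕ β)) = X.toRight := by ext; simp
  rw [completeBipartiteGraph_isMutualVisibilitySet_iff, hL, hR,
    ← card_le_one_iff_subsingleton, ← card_le_one_iff_subsingleton]
  simp only [Set.range_subset_iff, mem_coe, ← mem_toLeft, ← mem_toRight, ← eq_univ_iff_forall,
    ← card_eq_iff_eq_univ]
  have := X.card_toLeft_add_card_toRight
  omega

end completeBipartite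

section counting

variable {α β : Type*} [Fintype α] [Fintype β] {i : ℕ}

lemma card_filter_toLeft_eq_univ [DecidableEq α] (hi : Fintype.card α ≤ i) :
    #{X ∈ powersetCard i (univ : Finset (α ⊕ β)) | X.toLeft = univ} =
      (Fintype.card β).choose (i - Fintype.card α) := by
  rw [← card_univ (α := β), ← card_powersetCard]
  refine card_nbij' toRight (univ.disjSum ·) (fun X hX => ?_) (fun T hT => ?_) (fun X hX => ?_)
    (fun T _ => by simp)
  all_goals simp only [mem_coe, mem_filter, mem_powersetCard_univ] at *
  · have := X.card_toLeft_add_card_toRight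
    rw [hX.2, card_univ] at this
    omega
  · simp only [card_disjSum, card_univ, hT, toLeft_disjSum, and_true]
    omega
  · exact disjSum_eq_iff.2 ⟨hX.2.symm, rfl⟩

lemma card_filter_toRight_eq_univ [DecidableEq β] (hi : Fintype.card β ≤ i) :
    #{X ∈ powersetCard i (univ : Finset (α ⊕ β)) | X.toRight = univ} =
      (Fintype.card α).choose (i - Fintype.card β) := by
  rw [← card_filter_toLeft_eq_univ (β := α) hi]
  refine card_nbij' (·.map (Equiv.sumComm α β).toEmbedding)
    (·.map (Equiv.sumComm β α).toEmbedding) ?_ ?_ ?_ ?_ <;> intro X hX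
  · simp_all
  · simp_all
  · ext (_ | _) <;> simp
  · ext (_ | _) <;> simp

end counting

section mvCountBip

open scoped Classical

variable {m n i : ℕ}

lemma mvCountBip_eq_card_filter :
    mvCountBip m n i = ((powersetCard i univ).filter fun X : Finset (Fin m ⊕ Fin n) =>
      (completeBipartiteGraph (Fin m) (Fin n)).IsMutualVisibilitySet ↑X).card := by
  rw [mvCountBip, powersetCard_eq_filter, powerset_univ, filter_filter]

lemma isMutualVisibilitySet_iff_of_mem_powersetCard {X : Finset (Fin m ⊕ Fin n)}
    (hX : X ∈ powersetCard i univ) :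
    (completeBipartiteGraph (Fin m) (Fin n)).IsMutualVisibilitySet ↑X ↔
      (X.toLeft = univ → i ≤ m + 1) ∧ (X.toRight = univ → i ≤ n + 1) := by
  rw [completeBipartiteGraph_isMutualVisibilitySet_coe_iff, mem_powersetCard_univ.1 hX,
    Fintype.card_fin, Fintype.card_fin]

lemma mvCountBip_eq_choose (hmn : m ≤ n) (hi : i ≤ m + 1) :
    mvCountBip m n i = (m + n).choose i := by
  rw [mvCountBip_eq_card_filter, filter_true_of_mem fun X hX =>
    (isMutualVisibilitySet_iff_of_mem_powersetCard hX).2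
      ⟨fun _ => hi, fun _ => by omega⟩]
  simp

lemma mvCountBip_eq_choose_sub (hi₁ : m + 2 ≤ i) (hi₂ : i ≤ n + 1) :
    mvCountBip m n i = (m + n).choose i - n.choose (i - m) := by
  have hMV : ∀ X ∈ powersetCard i (univ : Finset (Fin m ⊕ Fin n)),
      (completeBipartiteGraph (Fin m) (Fin n)).IsMutualVisibilitySet ↑X ↔
        X.toLeft ≠ univ := by
    intro X hX
    simp only [isMutualVisibilitySet_iff_of_mem_powersetCard hX, hi₂,
      show ¬i ≤ m + 1 by omega, imp_false, implies_true, and_true, ne_eq]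
  rw [mvCountBip_eq_card_filter, filter_congr hMV, filter_not,
    card_sdiff_of_subset (filter_subset _ _), card_filter_toLeft_eq_univ (by simp; omega)]
  simp

lemma mvCountBip_eq_choose_sub_sub (hmn : m ≤ n) (hi₁ : n + 2 ≤ i) (hi₂ : i ≤ m + n - 2) :
    mvCountBip m n i = (m + n).choose i - n.choose (i - m) - m.choose (i - n) := by
  have hMV : ∀ X ∈ powersetCard i (univ : Finset (Fin m ⊕ Fin n)),
      (completeBipartiteGraph (Fin m) (Fin n)).IsMutualVisibilitySet ↑X ↔
        ¬(X.toLeft = univ ∨ X.toRight = univ) := by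
    intro X hX
    simp only [isMutualVisibilitySet_iff_of_mem_powersetCard hX,
      show ¬i ≤ n + 1 by omega, show ¬i ≤ m + 1 by omega, imp_false, not_or]
  have hdisj : Disjoint
      ((powersetCard i univ).filter fun X : Finset (Fin m ⊕ Fin n) => X.toLeft = univ)
      ((powersetCard i univ).filter fun X => X.toRight = univ) := by
    refine disjoint_filter.2 fun X hX hL hR => ?_
    have := X.card_toLeft_add_card_toRight
    rw [hL, hR, mem_powersetCard_univ.1 hX] at this
    simp at this
    omega
  rw [mvCountBip_eq_card_filter, filter_congr hMV, filter_not,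
    card_sdiff_of_subset (filter_subset _ _), filter_or, card_union_of_disjoint hdisj,
    card_filter_toLeft_eq_univ (by simp; omega),
    card_filter_toRight_eq_univ (by simp; omega)]
  simp [Nat.sub_sub]

lemma mvCountBip_eq_zero (hm : 3 ≤ m) (hn : 3 ≤ n) (hi : m + n - 2 < i) :
    mvCountBip m n i = 0 := by
  rw [mvCountBip_eq_card_filter, card_eq_zero, filter_eq_empty_iff]
  intro X hX hMV
  rw [isMutualVisibilitySet_iff_of_mem_powersetCard hX,
    ← card_eq_iff_eq_univ, ← card_eq_iff_eq_univ, Fintype.card_fin, Fintype.card_fin] at hMV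
  have := X.card_toLeft_add_card_toRight
  have hL := X.toLeft.card_le_univ
  have hR := X.toRight.card_le_univ
  rw [mem_powersetCard_univ.1 hX] at this
  simp only [Fintype.card_fin] at hL hR
  omega

end mvCountBip

theorem visPoly_completeBipartite (m n : ℕ) (hm : 3 ≤ m) (hmn : m ≤ n) :
    (∀ i, 1 ≤ i → i ≤ m + 1 → mvCountBip m n i = (m + n).choose i) ∧
    (∀ i, m + 2 ≤ i → i ≤ n + 1 → mvCountBip m n i = (m + n).choose i - n.choose (i - m)) ∧
    (∀ i, n + 2 ≤ i → i ≤ m + n - 2 →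
      mvCountBip m n i = (m + n).choose i - n.choose (i - m) - m.choose (i - n)) ∧
    (∀ i, m + n - 2 < i → mvCountBip m n i = 0) :=
  ⟨fun _ _ hi => mvCountBip_eq_choose hmn hi,
    fun _ hi₁ hi₂ => mvCountBip_eq_choose_sub hi₁ hi₂,
    fun _ hi₁ hi₂ => mvCountBip_eq_choose_sub_sub hmn hi₁ hi₂,
    fun _ hi => mvCountBip_eq_zero hm (hm.trans hmn) hi⟩
end

section
/- For the balanced complete bipartite graph K_{n,n} (n ≥ 3), the number of mutual-visibility sets of cardinality i equals C(2n, i) for 0 ≤ i ≤ n+1 and C(2n, i) − 2·C(n, i−n) for n+2 ≤ i ≤ 2n−2. -/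
open SimpleGraph Polynomial

namespace MVAux

variable {n : ℕ}

local notation "Gbp" => completeBipartiteGraph (Fin n) (Fin n)

lemma adj_lr (a b : Fin n) : (Gbp).Adj (Sum.inl a) (Sum.inr b) := by simp

lemma xvisible_refl {V : Type*} (G : SimpleGraph V) (X : Set V) (u : V) :
    G.XVisible X u u := by
  refine ⟨Walk.nil, Walk.IsPath.nil, by simp [SimpleGraph.dist_self], ?_⟩
  intro w hw _
  left; simpa using hw

lemma xvisible_of_adj {V : Type*} (G : SimpleGraph V) (X : Set V) {u v : V}
    (h : G.Adj u v) : G.XVisible X u v := by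
  refine ⟨Walk.cons h Walk.nil, ?_, ?_, ?_⟩
  · simp [Walk.cons_isPath_iff, h.ne]
  · rw [Walk.length_cons, Walk.length_nil, SimpleGraph.dist_eq_one_iff_adj.mpr h]
  · intro w hw _
    simp only [Walk.support_cons, Walk.support_nil, List.mem_cons, List.mem_singleton] at hw
    tauto

lemma dist_ll (hn : 0 < n) {a a' : Fin n} (h : a ≠ a') :
    (Gbp).dist (Sum.inl a) (Sum.inl a') = 2 := by
  set b : Fin n := ⟨0, hn⟩
  have hadj2 : (Gbp).Adj (Sum.inr b) (Sum.inl a') := by simp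
  set p : (Gbp).Walk (Sum.inl a) (Sum.inl a') :=
    Walk.cons (adj_lr a b) (Walk.cons hadj2 Walk.nil) with hp
  have hle : (Gbp).dist (Sum.inl a) (Sum.inl a') ≤ 2 := by
    simpa [hp] using SimpleGraph.dist_le p
  have hreach : (Gbp).Reachable (Sum.inl a) (Sum.inl a') := ⟨p⟩
  have hpos : 0 < (Gbp).dist (Sum.inl a) (Sum.inl a') :=
    hreach.pos_dist_of_ne (by simp [h])
  have hne1 : (Gbp).dist (Sum.inl a) (Sum.inl a') ≠ 1 := by
    intro h1
    have := SimpleGraph.dist_eq_one_iff_adj.mp h1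
    simp at this
  omega

lemma dist_rr (hn : 0 < n) {a a' : Fin n} (h : a ≠ a') :
    (Gbp).dist (Sum.inr a) (Sum.inr a') = 2 := by
  set b : Fin n := ⟨0, hn⟩
  have hadj1 : (Gbp).Adj (Sum.inr a) (Sum.inl b) := by simp
  have hadj2 : (Gbp).Adj (Sum.inl b) (Sum.inr a') := by simp
  set p : (Gbp).Walk (Sum.inr a) (Sum.inr a') :=
    Walk.cons hadj1 (Walk.cons hadj2 Walk.nil) with hp
  have hle : (Gbp).dist (Sum.inr a) (Sum.inr a') ≤ 2 := by
    simpa [hp] using SimpleGraph.dist_le p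
  have hreach : (Gbp).Reachable (Sum.inr a) (Sum.inr a') := ⟨p⟩
  have hpos : 0 < (Gbp).dist (Sum.inr a) (Sum.inr a') :=
    hreach.pos_dist_of_ne (by simp [h])
  have hne1 : (Gbp).dist (Sum.inr a) (Sum.inr a') ≠ 1 := by
    intro h1
    have := SimpleGraph.dist_eq_one_iff_adj.mp h1
    simp at this
  omega

lemma vis_ll_mp (hn : 0 < n) {X : Set (Fin n ⊕ Fin n)} {a a' : Fin n} (h : a ≠ a')
    (hv : (Gbp).XVisible X (Sum.inl a) (Sum.inl a')) :
    ∃ b : Fin n, Sum.inr b ∉ X := by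
  obtain ⟨p, hp, hlen, hX⟩ := hv
  rw [dist_ll hn h] at hlen
  have h1 : (0 : ℕ) < p.length := by omega
  have hadj := p.adj_getVert_succ h1
  rw [p.getVert_zero] at hadj
  cases hw : p.getVert 1 with
  | inl c =>
    exfalso
    rw [hw] at hadj
    simp at hadj
  | inr b =>
    refine ⟨b, fun hbX => ?_⟩
    have hmem : Sum.inr b ∈ p.support :=
      Walk.mem_support_iff_exists_getVert.mpr ⟨1, hw, by omega⟩
    rcases hX _ hmem hbX with h' | h' <;> simp at h'

lemma vis_rr_mp (hn : 0 < n) {X : Set (Fin n ⊕ Fin n)} {a a' : Fin n} (h : a ≠ a')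
    (hv : (Gbp).XVisible X (Sum.inr a) (Sum.inr a')) :
    ∃ b : Fin n, Sum.inl b ∉ X := by
  obtain ⟨p, hp, hlen, hX⟩ := hv
  rw [dist_rr hn h] at hlen
  have h1 : (0 : ℕ) < p.length := by omega
  have hadj := p.adj_getVert_succ h1
  rw [p.getVert_zero] at hadj
  cases hw : p.getVert 1 with
  | inr c =>
    exfalso
    rw [hw] at hadj
    simp at hadj
  | inl b =>
    refine ⟨b, fun hbX => ?_⟩
    have hmem : Sum.inl b ∈ p.support :=
      Walk.mem_support_iff_exists_getVert.mpr ⟨1, hw, by omega⟩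
    rcases hX _ hmem hbX with h' | h' <;> simp at h'

lemma vis_ll_mpr (hn : 0 < n) {X : Set (Fin n ⊕ Fin n)} {a a' : Fin n} (hne : a ≠ a')
    {b : Fin n} (hb : Sum.inr b ∉ X) : (Gbp).XVisible X (Sum.inl a) (Sum.inl a') := by
  have hadj2 : (Gbp).Adj (Sum.inr b) (Sum.inl a') := by simp
  refine ⟨Walk.cons (adj_lr a b) (Walk.cons hadj2 Walk.nil), ?_, ?_, ?_⟩
  · simp [Walk.cons_isPath_iff, hne]
  · simp [dist_ll hn hne]
  · intro w hwsup hwX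
    simp only [Walk.support_cons, Walk.support_nil, List.mem_cons,
      List.not_mem_nil, or_false] at hwsup
    rcases hwsup with rfl | rfl | rfl
    · exact Or.inl rfl
    · exact absurd hwX hb
    · exact Or.inr rfl

lemma vis_rr_mpr (hn : 0 < n) {X : Set (Fin n ⊕ Fin n)} {a a' : Fin n} (hne : a ≠ a')
    {b : Fin n} (hb : Sum.inl b ∉ X) : (Gbp).XVisible X (Sum.inr a) (Sum.inr a') := by
  have hadj1 : (Gbp).Adj (Sum.inr a) (Sum.inl b) := by simp
  have hadj2 : (Gbp).Adj (Sum.inl b) (Sum.inr a') := by simp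
  refine ⟨Walk.cons hadj1 (Walk.cons hadj2 Walk.nil), ?_, ?_, ?_⟩
  · simp [Walk.cons_isPath_iff, hne]
  · simp [dist_rr hn hne]
  · intro w hwsup hwX
    simp only [Walk.support_cons, Walk.support_nil, List.mem_cons,
      List.not_mem_nil, or_false] at hwsup
    rcases hwsup with rfl | rfl | rfl
    · exact Or.inl rfl
    · exact absurd hwX hb
    · exact Or.inr rfl

lemma mv_iff (hn : 0 < n) (X : Finset (Fin n ⊕ Fin n)) :
    (Gbp).IsMutualVisibilitySet ↑X ↔
      ((∀ a a' : Fin n, a ≠ a' → Sum.inl a ∈ X → Sum.inl a' ∈ X →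
          ∃ b : Fin n, Sum.inr b ∉ X) ∧
       (∀ b b' : Fin n, b ≠ b' → Sum.inr b ∈ X → Sum.inr b' ∈ X →
          ∃ a : Fin n, Sum.inl a ∉ X)) := by
  constructor
  · intro hMV
    refine ⟨fun a a' hne ha ha' => ?_, fun b b' hne hb hb' => ?_⟩
    · obtain ⟨b, hb⟩ := vis_ll_mp hn hne
        (hMV _ (Finset.mem_coe.mpr ha) _ (Finset.mem_coe.mpr ha'))
      exact ⟨b, fun h => hb (Finset.mem_coe.mpr h)⟩
    · obtain ⟨a, ha⟩ := vis_rr_mp hn hne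
        (hMV _ (Finset.mem_coe.mpr hb) _ (Finset.mem_coe.mpr hb'))
      exact ⟨a, fun h => ha (Finset.mem_coe.mpr h)⟩
  · rintro ⟨h1, h2⟩ u hu v hv
    match u, v with
    | Sum.inl a, Sum.inl a' =>
      by_cases hne : a = a'
      · subst hne; exact xvisible_refl _ _ _
      · obtain ⟨b, hb⟩ := h1 a a' hne (Finset.mem_coe.mp hu) (Finset.mem_coe.mp hv)
        exact vis_ll_mpr hn hne (fun h => hb (Finset.mem_coe.mp h))
    | Sum.inl a, Sum.inr b => exact xvisible_of_adj _ _ (by simp)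
    | Sum.inr b, Sum.inl a => exact xvisible_of_adj _ _ (by simp)
    | Sum.inr b, Sum.inr b' =>
      by_cases hne : b = b'
      · subst hne; exact xvisible_refl _ _ _
      · obtain ⟨a, ha⟩ := h2 b b' hne (Finset.mem_coe.mp hu) (Finset.mem_coe.mp hv)
        exact vis_rr_mpr hn hne (fun h => ha (Finset.mem_coe.mp h))

/-- The left part as a finset. -/
def Afin (n : ℕ) : Finset (Fin n ⊕ Fin n) :=
  Finset.univ.image (Sum.inl : Fin n → Fin n ⊕ Fin n)

/-- The right part as a finset. -/
def Bfin (n : ℕ) : Finset (Fin n ⊕ Fin n) :=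
  Finset.univ.image (Sum.inr : Fin n → Fin n ⊕ Fin n)

lemma card_Afin : (Afin n).card = n := by
  rw [Afin, Finset.card_image_of_injective _ Sum.inl_injective]
  simp

lemma card_Bfin : (Bfin n).card = n := by
  rw [Bfin, Finset.card_image_of_injective _ Sum.inr_injective]
  simp

lemma mem_Afin (v : Fin n ⊕ Fin n) : v ∈ Afin n ↔ ∃ a, v = Sum.inl a := by
  simp [Afin, eq_comm]

lemma mem_Bfin (v : Fin n ⊕ Fin n) : v ∈ Bfin n ↔ ∃ b, v = Sum.inr b := by
  simp [Bfin, eq_comm]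

lemma disj_AB : Disjoint (Afin n) (Bfin n) := by
  rw [Finset.disjoint_left]
  intro v hv hv'
  rw [mem_Afin] at hv
  rw [mem_Bfin] at hv'
  obtain ⟨a, rfl⟩ := hv
  obtain ⟨b, hb⟩ := hv'
  exact absurd hb (by simp)

lemma union_AB : Afin n ∪ Bfin n = Finset.univ := by
  ext v
  simp only [Finset.mem_union, Finset.mem_univ, iff_true, mem_Afin, mem_Bfin]
  cases v with
  | inl a => exact Or.inl ⟨a, rfl⟩
  | inr b => exact Or.inr ⟨b, rfl⟩

/-- Every small set is a mutual-visibility set. -/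
lemma mv_of_card_le (hn : 0 < n) (X : Finset (Fin n ⊕ Fin n))
    (hX : X.card ≤ n + 1) : (Gbp).IsMutualVisibilitySet ↑X := by
  rw [mv_iff hn]
  constructor
  · intro a a' hne ha ha'
    by_contra hc
    push_neg at hc
    have hsub : insert (Sum.inl a) (insert (Sum.inl a') (Bfin n)) ⊆ X := by
      intro v hv
      simp only [Finset.mem_insert, mem_Bfin] at hv
      rcases hv with rfl | rfl | ⟨b, rfl⟩
      · exact ha
      · exact ha'
      · exact hc b
    have hcard : (insert (Sum.inl a) (insert (Sum.inl a') (Bfin n))).card = n + 2 := by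
      rw [Finset.card_insert_of_notMem (by simp [mem_Bfin, hne]),
        Finset.card_insert_of_notMem (by simp [mem_Bfin]), card_Bfin]
    have := Finset.card_le_card hsub
    omega
  · intro b b' hne hb hb'
    by_contra hc
    push_neg at hc
    have hsub : insert (Sum.inr b) (insert (Sum.inr b') (Afin n)) ⊆ X := by
      intro v hv
      simp only [Finset.mem_insert, mem_Afin] at hv
      rcases hv with rfl | rfl | ⟨a, rfl⟩
      · exact hb
      · exact hb'
      · exact hc a
    have hcard : (insert (Sum.inr b) (insert (Sum.inr b') (Afin n))).card = n + 2 := by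
      rw [Finset.card_insert_of_notMem (by simp [mem_Afin, hne]),
        Finset.card_insert_of_notMem (by simp [mem_Afin]), card_Afin]
    have := Finset.card_le_card hsub
    omega

open scoped Classical in
/-- Characterisation of NON-mutual-visibility sets of middling size. -/
lemma not_mv_iff (hn : 0 < n) {i : ℕ} (hi : n + 2 ≤ i) (X : Finset (Fin n ⊕ Fin n))
    (hXc : X.card = i) :
    ¬ (Gbp).IsMutualVisibilitySet ↑X ↔ (Bfin n ⊆ X ∨ Afin n ⊆ X) := by
  rw [mv_iff hn]
  constructor
  · intro h
    rw [not_and_or] at h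
    push_neg at h
    rcases h with ⟨a, a', hne, _, _, hall⟩ | ⟨b, b', hne, _, _, hall⟩
    · left
      intro v hv
      rw [mem_Bfin] at hv
      obtain ⟨b, rfl⟩ := hv
      exact hall b
    · right
      intro v hv
      rw [mem_Afin] at hv
      obtain ⟨a, rfl⟩ := hv
      exact hall a
  · intro h
    rw [not_and_or]
    rcases h with hB | hA
    · left
      push_neg
      have hcard2 : 1 < (X \ Bfin n).card := by
        rw [Finset.card_sdiff_of_subset hB, card_Bfin, hXc]
        omega
      obtain ⟨u, hu, v, hv, huv⟩ := Finset.one_lt_card.mp hcard2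
      obtain ⟨hu1, hu2⟩ := Finset.mem_sdiff.mp hu
      obtain ⟨hv1, hv2⟩ := Finset.mem_sdiff.mp hv
      have hua : ∃ a, u = Sum.inl a := by
        cases u with
        | inl a => exact ⟨a, rfl⟩
        | inr b => exact absurd ((mem_Bfin _).mpr ⟨b, rfl⟩) hu2
      have hva : ∃ a, v = Sum.inl a := by
        cases v with
        | inl a => exact ⟨a, rfl⟩
        | inr b => exact absurd ((mem_Bfin _).mpr ⟨b, rfl⟩) hv2
      obtain ⟨a, rfl⟩ := hua
      obtain ⟨a', rfl⟩ := hva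
      refine ⟨a, a', by simpa using huv, hu1, hv1, fun b => hB ((mem_Bfin _).mpr ⟨b, rfl⟩)⟩
    · right
      push_neg
      have hcard2 : 1 < (X \ Afin n).card := by
        rw [Finset.card_sdiff_of_subset hA, card_Afin, hXc]
        omega
      obtain ⟨u, hu, v, hv, huv⟩ := Finset.one_lt_card.mp hcard2
      obtain ⟨hu1, hu2⟩ := Finset.mem_sdiff.mp hu
      obtain ⟨hv1, hv2⟩ := Finset.mem_sdiff.mp hv
      have hua : ∃ b, u = Sum.inr b := by
        cases u with
        | inr b => exact ⟨b, rfl⟩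
        | inl a => exact absurd ((mem_Afin _).mpr ⟨a, rfl⟩) hu2
      have hva : ∃ b, v = Sum.inr b := by
        cases v with
        | inr b => exact ⟨b, rfl⟩
        | inl a => exact absurd ((mem_Afin _).mpr ⟨a, rfl⟩) hv2
      obtain ⟨b, rfl⟩ := hua
      obtain ⟨b', rfl⟩ := hva
      refine ⟨b, b', by simpa using huv, hu1, hv1, fun a => hA ((mem_Afin _).mpr ⟨a, rfl⟩)⟩

open scoped Classical in
lemma card_contains (S : Finset (Fin n ⊕ Fin n)) (hScard : S.card = n) {i : ℕ}
    (hni : n ≤ i) :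
    (Finset.univ.filter (fun X : Finset (Fin n ⊕ Fin n) => X.card = i ∧ S ⊆ X)).card =
      ((Sᶜ).card).choose (i - n) := by
  rw [← Finset.card_powersetCard (i - n) Sᶜ]
  apply Finset.card_bij' (fun X _ => X \ S) (fun Y _ => Y ∪ S)
  · intro X hX
    simp only [Finset.mem_filter] at hX
    rw [Finset.mem_powersetCard]
    refine ⟨fun v hv => ?_, ?_⟩
    · rw [Finset.mem_compl]
      exact (Finset.mem_sdiff.mp hv).2
    · rw [Finset.card_sdiff_of_subset hX.2.2, hScard, hX.2.1]
  · intro Y hY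
    rw [Finset.mem_powersetCard] at hY
    have hdisj : Disjoint Y S := by
      rw [Finset.disjoint_right]
      intro v hv hv'
      exact (Finset.mem_compl.mp (hY.1 hv')) hv
    simp only [Finset.mem_filter, Finset.mem_univ, true_and]
    refine ⟨?_, Finset.subset_union_right⟩
    rw [Finset.card_union_of_disjoint hdisj, hY.2, hScard]
    omega
  · intro X hX
    simp only [Finset.mem_filter] at hX
    exact Finset.sdiff_union_of_subset hX.2.2
  · intro Y hY
    rw [Finset.mem_powersetCard] at hY
    apply Finset.union_sdiff_cancel_right
    rw [Finset.disjoint_right]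
    intro v hv hv'
    exact (Finset.mem_compl.mp (hY.1 hv')) hv

end MVAux

open MVAux in
theorem visPoly_balanced_completeBipartite (n : ℕ) (hn : 3 ≤ n) :
    (∀ i, i ≤ n + 1 → mvCountBip n n i = (2 * n).choose i) ∧
    (∀ i, n + 2 ≤ i → i ≤ 2 * n - 2 →
      mvCountBip n n i = (2 * n).choose i - 2 * n.choose (i - n)) := by
  classical
  have hn0 : 0 < n := by omega
  have hcardV : Fintype.card (Fin n ⊕ Fin n) = 2 * n := by
    simp [two_mul]
  have htotal : ∀ i : ℕ,
      (Finset.univ.filter (fun X : Finset (Fin n ⊕ Fin n) => X.card = i)).card =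
        (2 * n).choose i := by
    intro i
    rw [show (Finset.univ.filter (fun X : Finset (Fin n ⊕ Fin n) => X.card = i)) =
        Finset.powersetCard i Finset.univ by
      rw [Finset.powersetCard_eq_filter, Finset.powerset_univ]]
    rw [Finset.card_powersetCard, Finset.card_univ, hcardV]
  constructor
  · intro i hi
    rw [mvCountBip]
    rw [show (Finset.univ.filter (fun X : Finset (Fin n ⊕ Fin n) =>
        X.card = i ∧ (completeBipartiteGraph (Fin n) (Fin n)).IsMutualVisibilitySet ↑X)) =
        Finset.univ.filter (fun X : Finset (Fin n ⊕ Fin n) => X.card = i) by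
      ext X
      simp only [Finset.mem_filter, Finset.mem_univ, true_and, and_iff_left_iff_imp]
      intro hX
      exact mv_of_card_le hn0 X (by omega)]
    exact htotal i
  · intro i hi1 hi2
    -- split the total into good and bad
    have hsplit := Finset.card_filter_add_card_filter_not
      (s := (Finset.univ.filter (fun X : Finset (Fin n ⊕ Fin n) => X.card = i)))
      (p := fun X => (completeBipartiteGraph (Fin n) (Fin n)).IsMutualVisibilitySet ↑X)
    rw [Finset.filter_filter, Finset.filter_filter, htotal i] at hsplit
    have hgood : mvCountBip n n i =
        ((Finset.univ.filter (fun X : Finset (Fin n ⊕ Fin n) =>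
          X.card = i ∧ (completeBipartiteGraph (Fin n) (Fin n)).IsMutualVisibilitySet ↑X))).card := by
      rw [mvCountBip]
    -- bad sets
    have hbadeq : (Finset.univ.filter (fun X : Finset (Fin n ⊕ Fin n) =>
        X.card = i ∧ ¬ (completeBipartiteGraph (Fin n) (Fin n)).IsMutualVisibilitySet ↑X)) =
        (Finset.univ.filter (fun X : Finset (Fin n ⊕ Fin n) => X.card = i ∧ Bfin n ⊆ X)) ∪
        (Finset.univ.filter (fun X : Finset (Fin n ⊕ Fin n) => X.card = i ∧ Afin n ⊆ X)) := by
      ext X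
      simp only [Finset.mem_filter, Finset.mem_univ, true_and, Finset.mem_union]
      constructor
      · rintro ⟨hc, hm⟩
        rcases (not_mv_iff hn0 hi1 X hc).mp hm with h | h
        · exact Or.inl ⟨hc, h⟩
        · exact Or.inr ⟨hc, h⟩
      · rintro (⟨hc, h⟩ | ⟨hc, h⟩)
        · exact ⟨hc, (not_mv_iff hn0 hi1 X hc).mpr (Or.inl h)⟩
        · exact ⟨hc, (not_mv_iff hn0 hi1 X hc).mpr (Or.inr h)⟩
    have hdisj : Disjoint
        (Finset.univ.filter (fun X : Finset (Fin n ⊕ Fin n) => X.card = i ∧ Bfin n ⊆ X))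
        (Finset.univ.filter (fun X : Finset (Fin n ⊕ Fin n) => X.card = i ∧ Afin n ⊆ X)) := by
      rw [Finset.disjoint_left]
      intro X hX hX'
      simp only [Finset.mem_filter] at hX hX'
      have : Finset.univ ⊆ X := by
        rw [← union_AB]
        exact Finset.union_subset hX'.2.2 hX.2.2
      have := Finset.card_le_card this
      rw [Finset.card_univ, hcardV, hX.2.1] at this
      omega
    have hcompl_B : ((Bfin n)ᶜ : Finset (Fin n ⊕ Fin n)).card = n := by
      rw [Finset.card_compl, hcardV, card_Bfin]
      omega
    have hcompl_A : ((Afin n)ᶜ : Finset (Fin n ⊕ Fin n)).card = n := by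
      rw [Finset.card_compl, hcardV, card_Afin]
      omega
    have hB := card_contains (n := n) (Bfin n) card_Bfin (i := i) (by omega)
    have hA := card_contains (n := n) (Afin n) card_Afin (i := i) (by omega)
    rw [hcompl_B] at hB
    rw [hcompl_A] at hA
    have hbadcard : (Finset.univ.filter (fun X : Finset (Fin n ⊕ Fin n) =>
        X.card = i ∧ ¬ (completeBipartiteGraph (Fin n) (Fin n)).IsMutualVisibilitySet ↑X)).card =
        2 * n.choose (i - n) := by
      rw [hbadeq, Finset.card_union_of_disjoint hdisj, hB, hA]
      ring
    rw [hgood]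
    omega
end
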